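/- arXiv:1602.03992 — 8 statements merged into one kernel-verified Lean document; each statement's English description precedes it below -/
import Mathlib

section
/- Let 0 < p ≤ 1 and 0 < ε. For every x₀ ∈ ℝ, every ρ ≥ 0, and every x ∈ ℝ, the smoothed ℓ₀ surrogate satisfies the quadratic majorization ρ·g_p^ε(x) ≤ ρ·g_p^ε(x₀) + w(x₀; ρ)·(x² − x₀²), with equality when x = x₀. -/
/-- The smoothed ℓ₀ surrogate `g_p^ε`. -/
noncomputable def gpe (p ε x : ℝ) : ℝ :=
  if |x| ≤ ε then x ^ 2 / (2 * ε * (p + ε) * Real.log (1 + 1 / p))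
  else (Real.log ((p + |x|) / (p + ε)) + ε / (2 * (p + ε))) / Real.log (1 + 1 / p)

/-- The majorization weight `w(x₀; ρ)`. -/
noncomputable def wgt (p ε ρ x₀ : ℝ) : ℝ :=
  if |x₀| ≤ ε then ρ / (2 * ε * (p + ε) * Real.log (1 + 1 / p))
  else ρ / (2 * Real.log (1 + 1 / p) * |x₀| * (|x₀| + p))

/-!
Write `y = x²`. Up to the factor `1 / log (1 + 1/p)`, the surrogate is `y / (2ε(p+ε))` for
`y ≤ ε²` and `log (p + √y) + const` beyond. Both pieces are concave in `y`, they agree at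
`y = ε²`, and their slopes `1 / (2ε(p+ε))` and `1 / (2√y(√y+p))` match there and then decrease.
So the surrogate is a concave function of `x²` whose slope at `x₀²` is the weight, and the
majorization is the tangent-line inequality. Every case reduces to the tangent bound for
`u ↦ log (p + u)` in the variable `u²`: `log z ≤ z - 1` followed by `2s(t - s) ≤ t² - s²`.
-/

noncomputable def logSurrogate (p ε x : ℝ) : ℝ :=
  if |x| ≤ ε then x ^ 2 / (2 * ε * (p + ε))
  else Real.log ((p + |x|) / (p + ε)) + ε / (2 * (p + ε))

/-- The derivative of `logSurrogate p ε` with respect to `x²`. -/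
noncomputable def logSurrogateSlope (p ε x : ℝ) : ℝ :=
  if |x| ≤ ε then 1 / (2 * ε * (p + ε)) else 1 / (2 * |x| * (|x| + p))

lemma gpe_eq_logSurrogate_div (p ε x : ℝ) :
    gpe p ε x = logSurrogate p ε x / Real.log (1 + 1 / p) := by
  unfold gpe logSurrogate
  split_ifs
  · rw [div_div]
  · rfl

lemma wgt_eq_mul_logSurrogateSlope_div (p ε ρ x₀ : ℝ) :
    wgt p ε ρ x₀ = ρ * logSurrogateSlope p ε x₀ / Real.log (1 + 1 / p) := by
  unfold wgt logSurrogateSlope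
  split_ifs
  · rw [mul_one_div, div_div]
  · rw [mul_one_div, div_div]
    ring_nf

lemma log_add_div_add_le_sq_sub_sq {p s t : ℝ} (hp : 0 ≤ p) (hs : 0 < s) (ht : 0 < t) :
    Real.log ((p + t) / (p + s)) ≤ 1 / (2 * s * (s + p)) * (t ^ 2 - s ^ 2) := by
  have hps : 0 < p + s := by positivity
  calc Real.log ((p + t) / (p + s))
      ≤ (p + t) / (p + s) - 1 := Real.log_le_sub_one_of_pos (by positivity)
    _ = 1 / (2 * s * (s + p)) * (2 * s * (t - s)) := by field_simp; ring
    _ ≤ 1 / (2 * s * (s + p)) * (t ^ 2 - s ^ 2) := by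
      gcongr
      nlinarith [sq_nonneg (t - s)]

/-- The right side has the smaller coefficient of `t²`, so it suffices to take `t = ε`, where
this is the tangent bound at `s` evaluated at `ε`. -/
lemma quadratic_le_log_tangent {p ε s t : ℝ} (hp : 0 ≤ p) (hε : 0 < ε) (hs : ε < s)
    (ht : t ^ 2 ≤ ε ^ 2) :
    t ^ 2 / (2 * ε * (p + ε)) ≤
      Real.log ((p + s) / (p + ε)) + ε / (2 * (p + ε)) +
        1 / (2 * s * (s + p)) * (t ^ 2 - s ^ 2) := by
  have hpε : 0 < p + ε := by positivity
  have key := log_add_div_add_le_sq_sub_sq hp (hε.trans hs) hε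
  have hlog_inv : Real.log ((p + s) / (p + ε)) = -Real.log ((p + ε) / (p + s)) := by
    rw [← Real.log_inv, inv_div]
  have hslope : 1 / (2 * s * (s + p)) ≤ 1 / (2 * ε * (p + ε)) :=
    one_div_le_one_div_of_le (by positivity) (by nlinarith)
  have hmono := mul_le_mul_of_nonneg_right ht (sub_nonneg.2 hslope)
  have hε_eq : ε / (2 * (p + ε)) = 1 / (2 * ε * (p + ε)) * ε ^ 2 := by field_simp
  have ht_eq : t ^ 2 / (2 * ε * (p + ε)) = 1 / (2 * ε * (p + ε)) * t ^ 2 := by ring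
  linarith

lemma logSurrogate_le_tangent {p ε : ℝ} (hp : 0 ≤ p) (hε : 0 < ε) (x₀ x : ℝ) :
    logSurrogate p ε x ≤
      logSurrogate p ε x₀ + logSurrogateSlope p ε x₀ * (x ^ 2 - x₀ ^ 2) := by
  unfold logSurrogate logSurrogateSlope
  rw [← sq_abs x, ← sq_abs x₀]
  set s := |x₀|
  set t := |x|
  split_ifs with ht hs hs
  · apply le_of_eq
    field_simp
    ring
  · exact quadratic_le_log_tangent hp hε (not_le.1 hs) (pow_le_pow_left₀ (abs_nonneg x) ht 2)
  · have key := log_add_div_add_le_sq_sub_sq hp hε (hε.trans (not_le.1 ht))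
    have hε_eq : ε / (2 * (p + ε)) = 1 / (2 * ε * (ε + p)) * ε ^ 2 := by field_simp; ring
    have hrhs : s ^ 2 / (2 * ε * (p + ε)) + 1 / (2 * ε * (p + ε)) * (t ^ 2 - s ^ 2) =
        1 / (2 * ε * (ε + p)) * (t ^ 2 - ε ^ 2) + 1 / (2 * ε * (ε + p)) * ε ^ 2 := by ring
    linarith
  · have hs₀ : 0 < s := hε.trans (not_le.1 hs)
    have ht₀ : 0 < t := hε.trans (not_le.1 ht)
    have key := log_add_div_add_le_sq_sub_sq hp hs₀ ht₀
    have hlog_mul : Real.log ((p + t) / (p + ε)) =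
        Real.log ((p + t) / (p + s)) + Real.log ((p + s) / (p + ε)) := by
      rw [← Real.log_mul (by positivity) (by positivity)]
      congr 1
      field_simp
    linarith

theorem stmt0_general (p ε : ℝ) (hp : 0 < p) (hε : 0 < ε)
    (x₀ ρ : ℝ) (hρ : 0 ≤ ρ) (x : ℝ) :
    ρ * gpe p ε x ≤ ρ * gpe p ε x₀ + wgt p ε ρ x₀ * (x ^ 2 - x₀ ^ 2) ∧
    ρ * gpe p ε x₀ = ρ * gpe p ε x₀ + wgt p ε ρ x₀ * (x₀ ^ 2 - x₀ ^ 2) := by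
  refine ⟨?_, by simp⟩
  have hL : 0 < Real.log (1 + 1 / p) := Real.log_pos (by simpa using hp)
  rw [gpe_eq_logSurrogate_div, gpe_eq_logSurrogate_div, wgt_eq_mul_logSurrogateSlope_div]
  calc ρ * (logSurrogate p ε x / Real.log (1 + 1 / p))
      = ρ / Real.log (1 + 1 / p) * logSurrogate p ε x := by ring
    _ ≤ ρ / Real.log (1 + 1 / p) *
        (logSurrogate p ε x₀ + logSurrogateSlope p ε x₀ * (x ^ 2 - x₀ ^ 2)) := by
      gcongr
      exact logSurrogate_le_tangent hp.le hε x₀ x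
    _ = _ := by ring

theorem stmt0 (p ε : ℝ) (hp : 0 < p) (hp1 : p ≤ 1) (hε : 0 < ε)
    (x₀ ρ : ℝ) (hρ : 0 ≤ ρ) (x : ℝ) :
    ρ * gpe p ε x ≤ ρ * gpe p ε x₀ + wgt p ε ρ x₀ * (x ^ 2 - x₀ ^ 2) ∧
    ρ * gpe p ε x₀ = ρ * gpe p ε x₀ + wgt p ε ρ x₀ * (x₀ ^ 2 - x₀ ^ 2) :=
  stmt0_general p ε hp hε x₀ ρ hρ x
end

section
/- Let 0 < p ≤ 1, 0 < ε, integers m ≥ q ≥ 1, nonnegative reals ρ₁,…,ρ_q, and U₀ ∈ St(m,q). Define weights w_{ij} = w((U₀)_{ij}; ρ_j), for each column j let w_max,j = max_{1≤i≤m} w_{ij}, and define the m×q matrix H by H_{ij} = (w_{ij} − w_max,j)(U₀)_{ij}. Then for every U ∈ St(m,q), Σ_{j=1}^q ρ_j Σ_{i=1}^m g_p^ε(U_{ij}) − 2·Tr(HᵀU) ≤ Σ_{j=1}^q ρ_j Σ_{i=1}^m g_p^ε((U₀)_{ij}) − 2·Tr(HᵀU₀); that is, up to an additive constant, the linear function 2·Tr(HᵀU)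 majorizes the penalty Σ_j ρ_j Σ_i g_p^ε(U_{ij}) on the Stiefel manifold, with equality at U = U₀. -/
open Matrix

noncomputable def gpeProfile (p ε s : ℝ) : ℝ :=
  if s ≤ ε then s ^ 2 / (2 * ε * (p + ε))
  else Real.log ((p + s) / (p + ε)) + ε / (2 * (p + ε))

noncomputable def gpeSlope (p ε s : ℝ) : ℝ :=
  if s ≤ ε then 1 / (2 * ε * (p + ε)) else 1 / (2 * s * (s + p))

theorem gpe_eq_gpeProfile_div (p ε x : ℝ) :
    gpe p ε x = gpeProfile p ε |x| / Real.log (1 + 1 / p) := by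
  unfold gpe gpeProfile
  split_ifs
  · rw [sq_abs, div_div]
  · rfl

theorem wgt_eq_mul_gpeSlope_div (p ε ρ x₀ : ℝ) :
    wgt p ε ρ x₀ = ρ * gpeSlope p ε |x₀| / Real.log (1 + 1 / p) := by
  unfold wgt gpeSlope
  split_ifs <;> rw [mul_one_div, div_div]
  congr 1
  ring

theorem log_add_sub_log_add_le {p a b : ℝ} (hp : 0 < p) (hb : 0 < b) (ha : 0 < p + a) :
    Real.log (p + a) - Real.log (p + b) ≤ (a ^ 2 - b ^ 2) / (2 * b * (b + p)) := by
  have hpb : 0 < p + b := by linarith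
  have hlog : Real.log (p + a) - Real.log (p + b) ≤ (a - b) / (p + b) := by
    have h := Real.log_le_sub_one_of_pos (div_pos ha hpb)
    rw [Real.log_div ha.ne' hpb.ne'] at h
    rwa [div_sub_one hpb.ne', add_sub_add_left_eq_sub] at h
  have hsq : (a ^ 2 - b ^ 2) / (2 * b * (b + p)) - (a - b) / (p + b)
      = (a - b) ^ 2 / (2 * b * (b + p)) := by
    field_simp
    ring
  have : 0 ≤ (a - b) ^ 2 / (2 * b * (b + p)) := by positivity
  linarith

section Profile

variable {p ε : ℝ}

theorem gpeProfile_of_le (hp : 0 < p) (hε : 0 < ε) {s : ℝ} (hs : ε ≤ s) :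
    gpeProfile p ε s = Real.log ((p + s) / (p + ε)) + ε / (2 * (p + ε)) := by
  unfold gpeProfile
  split_ifs with h
  · obtain rfl : s = ε := le_antisymm h hs
    rw [div_self (by positivity), Real.log_one]
    field_simp
    ring
  · rfl

theorem gpeSlope_of_le_eps {s : ℝ} (hs : s ≤ ε) : gpeSlope p ε s = 1 / (2 * ε * (p + ε)) :=
  if_pos hs

theorem gpeSlope_of_le {s : ℝ} (hs : ε ≤ s) :
    gpeSlope p ε s = 1 / (2 * s * (s + p)) := by
  unfold gpeSlope
  split_ifs with h
  · obtain rfl : s = ε := le_antisymm h hs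
    ring
  · rfl

theorem gpeSlope_le_gpeSlope_eps (hp : 0 < p) (hε : 0 < ε) {s : ℝ} (hs : ε ≤ s) :
    gpeSlope p ε s ≤ gpeSlope p ε ε := by
  rw [gpeSlope_of_le hs, gpeSlope_of_le_eps le_rfl]
  exact one_div_le_one_div_of_le (by positivity) (by nlinarith)

theorem gpeProfile_eq_tangent_of_le_eps {a b : ℝ} (ha : a ≤ ε) (hb : b ≤ ε) :
    gpeProfile p ε a = gpeProfile p ε b + gpeSlope p ε b * (a ^ 2 - b ^ 2) := by
  simp only [gpeProfile, gpeSlope, if_pos ha, if_pos hb]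
  ring

theorem gpeProfile_le_tangent_of_eps_le (hp : 0 < p) (hε : 0 < ε) {a b : ℝ}
    (ha : ε ≤ a) (hb : ε ≤ b) :
    gpeProfile p ε a ≤ gpeProfile p ε b + gpeSlope p ε b * (a ^ 2 - b ^ 2) := by
  rw [gpeProfile_of_le hp hε ha, gpeProfile_of_le hp hε hb, gpeSlope_of_le hb, one_div_mul_eq_div,
    Real.log_div (by linarith) (by linarith), Real.log_div (by linarith) (by linarith)]
  linarith [log_add_sub_log_add_le hp (hε.trans_le hb) (by linarith : 0 < p + a)]

theorem gpeProfile_le_tangent (hp : 0 < p) (hε : 0 < ε) {a : ℝ} (ha : 0 ≤ a) (b : ℝ) :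
    gpeProfile p ε a ≤ gpeProfile p ε b + gpeSlope p ε b * (a ^ 2 - b ^ 2) := by
  rcases le_total a ε with haε | hεa <;> rcases le_total b ε with hbε | hεb
  · exact (gpeProfile_eq_tangent_of_le_eps haε hbε).le
  · have hsq : a ^ 2 - ε ^ 2 ≤ 0 := by nlinarith
    calc gpeProfile p ε a = gpeProfile p ε ε + gpeSlope p ε ε * (a ^ 2 - ε ^ 2) :=
          gpeProfile_eq_tangent_of_le_eps haε le_rfl
      _ ≤ gpeProfile p ε ε + gpeSlope p ε b * (a ^ 2 - ε ^ 2) := by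
          have := mul_le_mul_of_nonpos_right (gpeSlope_le_gpeSlope_eps hp hε hεb) hsq
          linarith
      _ ≤ gpeProfile p ε b + gpeSlope p ε b * (ε ^ 2 - b ^ 2)
            + gpeSlope p ε b * (a ^ 2 - ε ^ 2) := by
          gcongr
          exact gpeProfile_le_tangent_of_eps_le hp hε le_rfl hεb
      _ = gpeProfile p ε b + gpeSlope p ε b * (a ^ 2 - b ^ 2) := by ring
  · calc gpeProfile p ε a ≤ gpeProfile p ε ε + gpeSlope p ε ε * (a ^ 2 - ε ^ 2) :=
          gpeProfile_le_tangent_of_eps_le hp hε hεa le_rfl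
      _ = gpeProfile p ε b + gpeSlope p ε b * (a ^ 2 - b ^ 2) := by
          rw [gpeProfile_eq_tangent_of_le_eps le_rfl hbε, gpeSlope_of_le_eps le_rfl,
            gpeSlope_of_le_eps hbε]
          ring
  · exact gpeProfile_le_tangent_of_eps_le hp hε hεa hεb

end Profile

theorem mul_gpe_le_tangent {p ε ρ : ℝ} (hp : 0 < p) (hε : 0 < ε) (hρ : 0 ≤ ρ) (x x₀ : ℝ) :
    ρ * gpe p ε x ≤ ρ * gpe p ε x₀ + wgt p ε ρ x₀ * (x ^ 2 - x₀ ^ 2) := by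
  have hL : 0 < Real.log (1 + 1 / p) := Real.log_pos (by simpa using hp)
  have h := mul_le_mul_of_nonneg_left (gpeProfile_le_tangent hp hε (abs_nonneg x) |x₀|)
    (div_nonneg hρ hL.le)
  rw [gpe_eq_gpeProfile_div, gpe_eq_gpeProfile_div, wgt_eq_mul_gpeSlope_div, ← sq_abs x,
    ← sq_abs x₀]
  calc _ = ρ / Real.log (1 + 1 / p) * gpeProfile p ε |x| := by ring
    _ ≤ _ := h
    _ = _ := by ring

theorem sum_mul_sq_sub_sq_le {ι : Type*} [Fintype ι] (w : ι → ℝ) {W : ℝ} (hW : ∀ i, w i ≤ W)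
    {u v : ι → ℝ} (huv : ∑ i, u i ^ 2 = ∑ i, v i ^ 2) :
    ∑ i, w i * (u i ^ 2 - v i ^ 2) ≤ 2 * ∑ i, (w i - W) * v i * (u i - v i) := by
  have hsplit : ∑ i, w i * (u i ^ 2 - v i ^ 2) - 2 * ∑ i, (w i - W) * v i * (u i - v i)
      = ∑ i, (w i - W) * (u i - v i) ^ 2 + W * (∑ i, u i ^ 2 - ∑ i, v i ^ 2) := by
    simp only [Finset.mul_sum, ← Finset.sum_sub_distrib, ← Finset.sum_add_distrib]
    exact Finset.sum_congr rfl fun i _ => by ring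
  have hneg : ∑ i, (w i - W) * (u i - v i) ^ 2 ≤ 0 :=
    Finset.sum_nonpos fun i _ => mul_nonpos_of_nonpos_of_nonneg (by linarith [hW i]) (sq_nonneg _)
  rw [huv, sub_self, mul_zero, add_zero] at hsplit
  linarith

theorem Matrix.sum_sq_apply_eq_one_of_transpose_mul_self {m q R : Type*} [Fintype m]
    [DecidableEq q] [Semiring R] {V : Matrix m q R} (hV : Vᵀ * V = 1) (j : q) :
    ∑ i, V i j ^ 2 = 1 := by
  simpa [Matrix.mul_apply, pow_two] using congrFun (congrFun hV j) j

theorem Matrix.trace_transpose_mul_eq_sum {m q R : Type*} [Fintype m] [Fintype q]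
    [AddCommMonoid R] [Mul R] (A B : Matrix m q R) : trace (Aᵀ * B) = ∑ j, ∑ i, A i j * B i j := by
  simp [trace, mul_apply]

theorem stmt1_general (p ε : ℝ) (hp : 0 < p) (hε : 0 < ε)
    (m q : ℕ)
    (ρ : Fin q → ℝ) (hρ : ∀ j, 0 ≤ ρ j)
    (U₀ : Matrix (Fin m) (Fin q) ℝ) (hU₀ : U₀ᵀ * U₀ = 1)
    (H : Matrix (Fin m) (Fin q) ℝ)
    (hH : H = Matrix.of fun i j =>
      (wgt p ε (ρ j) (U₀ i j) - ⨆ i' : Fin m, wgt p ε (ρ j) (U₀ i' j)) * U₀ i j) :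
    ∀ U : Matrix (Fin m) (Fin q) ℝ, Uᵀ * U = 1 →
      (∑ j, ρ j * ∑ i, gpe p ε (U i j)) - 2 * Matrix.trace (Hᵀ * U)
        ≤ (∑ j, ρ j * ∑ i, gpe p ε (U₀ i j)) - 2 * Matrix.trace (Hᵀ * U₀) := by
  intro U hU
  have hcol : ∀ j, ρ j * ∑ i, gpe p ε (U i j)
      ≤ ρ j * ∑ i, gpe p ε (U₀ i j) + 2 * ∑ i, H i j * (U i j - U₀ i j) := fun j => calc
    _ ≤ ρ j * ∑ i, gpe p ε (U₀ i j) + ∑ i, wgt p ε (ρ j) (U₀ i j) * (U i j ^ 2 - U₀ i j ^ 2) := by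
        rw [Finset.mul_sum, Finset.mul_sum, ← Finset.sum_add_distrib]
        exact Finset.sum_le_sum fun i _ => mul_gpe_le_tangent hp hε (hρ j) _ _
    _ ≤ _ := by
        gcongr
        simp only [hH, of_apply]
        exact sum_mul_sq_sub_sq_le _ (le_ciSup (Set.finite_range _).bddAbove)
          ((sum_sq_apply_eq_one_of_transpose_mul_self hU j).trans
            (sum_sq_apply_eq_one_of_transpose_mul_self hU₀ j).symm)
  have htrace : trace (Hᵀ * U) - trace (Hᵀ * U₀) = ∑ j, ∑ i, H i j * (U i j - U₀ i j) := by
    rw [← trace_sub, ← Matrix.mul_sub, trace_transpose_mul_eq_sum]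
    rfl
  have hsum := Finset.sum_le_sum fun j (_ : j ∈ Finset.univ) => hcol j
  rw [Finset.sum_add_distrib, ← Finset.mul_sum] at hsum
  linarith

theorem stmt1 (p ε : ℝ) (hp : 0 < p) (hp1 : p ≤ 1) (hε : 0 < ε)
    (m q : ℕ) (hq : 1 ≤ q) (hqm : q ≤ m)
    (ρ : Fin q → ℝ) (hρ : ∀ j, 0 ≤ ρ j)
    (U₀ : Matrix (Fin m) (Fin q) ℝ) (hU₀ : U₀ᵀ * U₀ = 1)
    (H : Matrix (Fin m) (Fin q) ℝ)
    (hH : H = Matrix.of fun i j =>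
      (wgt p ε (ρ j) (U₀ i j) - ⨆ i' : Fin m, wgt p ε (ρ j) (U₀ i' j)) * U₀ i j) :
    ∀ U : Matrix (Fin m) (Fin q) ℝ, Uᵀ * U = 1 →
      (∑ j, ρ j * ∑ i, gpe p ε (U i j)) - 2 * Matrix.trace (Hᵀ * U)
        ≤ (∑ j, ρ j * ∑ i, gpe p ε (U₀ i j)) - 2 * Matrix.trace (Hᵀ * U₀) :=
  stmt1_general p ε hp hε m q ρ hρ U₀ hU₀ H hH
end

section
/- Let m ≥ q ≥ 1 and let Y be a real m×q matrix with a singular value decomposition Y = V_L Σ V_Rᵀ, where V_L ∈ St(m,q), V_R is a q×q orthogonal matrix, and Σ is a q×q diagonal matrix with nonnegative diagonal entries. Then X* = V_L V_Rᵀ belongs to St(m,q) and maximizes Tr(YᵀX) over St(m,q): for every X ∈ St(m,q), Tr(YᵀX) ≤ Tr(YᵀX*) = Tr(Σ). -/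
/-! With `Y = V_L Σ V_Rᵀ`, cyclicity of the trace gives
`Tr(YᵀX) = ∑ᵢ σᵢ ⟨V_L eᵢ, X V_R eᵢ⟩`. When `X` has orthonormal columns so does `X V_R`, hence
each inner product is between two unit vectors and is at most `1` by Cauchy–Schwarz; for
`X = V_L V_Rᵀ` we have `X V_R = V_L` and every inner product equals `1`. -/

open Matrix

lemma transpose_mul_self_mul_eq_one {R m n k : Type*} [Fintype m] [Fintype n] [DecidableEq n]
    [DecidableEq k] [CommSemiring R] {A : Matrix m n R} {B : Matrix n k R}
    (hA : Aᵀ * A = 1) (hB : Bᵀ * B = 1) : (A * B)ᵀ * (A * B) = 1 := by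
  rw [transpose_mul, Matrix.mul_assoc, ← Matrix.mul_assoc Aᵀ, hA, Matrix.one_mul, hB]

lemma diag_transpose_mul_le_one {R m n : Type*} [Fintype m] [DecidableEq n] [CommRing R]
    [LinearOrder R] [IsStrictOrderedRing R] {A B : Matrix m n R}
    (hA : Aᵀ * A = 1) (hB : Bᵀ * B = 1) (i : n) : (Aᵀ * B) i i ≤ 1 := by
  have cauchy_schwarz : (Aᵀ * B) i i ^ 2 ≤ (Aᵀ * A) i i * (Bᵀ * B) i i := by
    simpa only [mul_apply, transpose_apply, sq] using
      Finset.sum_mul_sq_le_sq_mul_sq Finset.univ (fun j => A j i) (fun j => B j i)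
  rw [hA, hB, one_apply_eq, one_mul] at cauchy_schwarz
  exact ((sq_le_one_iff_abs_le_one _).mp cauchy_schwarz).trans' (le_abs_self _)

lemma trace_svd_transpose_mul {R m n k : Type*} [Fintype m] [Fintype n] [Fintype k]
    [DecidableEq n] [CommRing R] (U : Matrix m n R) (σ : n → R) (V : Matrix k n R)
    (X : Matrix m k R) :
    trace ((U * diagonal σ * Vᵀ)ᵀ * X) = ∑ i, σ i * (Uᵀ * (X * V)) i i := by
  rw [transpose_mul, transpose_mul, transpose_transpose, diagonal_transpose,
    Matrix.mul_assoc, Matrix.mul_assoc, trace_mul_comm, Matrix.mul_assoc, Matrix.mul_assoc]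
  simp only [trace, diag, diagonal_mul]

theorem stmt2_general (m q : ℕ)
    (Y VL : Matrix (Fin m) (Fin q) ℝ) (VR : Matrix (Fin q) (Fin q) ℝ)
    (σ : Fin q → ℝ) (hσ : ∀ i, 0 ≤ σ i)
    (hVL : VLᵀ * VL = 1) (hVR : VRᵀ * VR = 1)
    (hY : Y = VL * Matrix.diagonal σ * VRᵀ) :
    (VL * VRᵀ)ᵀ * (VL * VRᵀ) = 1 ∧
    Matrix.trace (Yᵀ * (VL * VRᵀ)) = Matrix.trace (Matrix.diagonal σ) ∧
    ∀ X : Matrix (Fin m) (Fin q) ℝ, Xᵀ * X = 1 →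
      Matrix.trace (Yᵀ * X) ≤ Matrix.trace (Yᵀ * (VL * VRᵀ)) := by
  have hVRt : VRᵀᵀ * VRᵀ = 1 := by
    rw [transpose_transpose]
    exact mul_eq_one_comm.mp hVR
  have hVLVR : VL * VRᵀ * VR = VL := by rw [Matrix.mul_assoc, hVR, Matrix.mul_one]
  have htrace : trace (Yᵀ * (VL * VRᵀ)) = trace (diagonal σ) := by
    simp only [hY, trace_svd_transpose_mul, hVLVR, hVL, one_apply_eq, mul_one,
      trace_diagonal]
  refine ⟨transpose_mul_self_mul_eq_one hVL hVRt, htrace, fun X hX => ?_⟩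
  rw [htrace, trace_diagonal, hY, trace_svd_transpose_mul]
  exact Finset.sum_le_sum fun i _ => mul_le_of_le_one_right (hσ i)
    (diag_transpose_mul_le_one hVL (transpose_mul_self_mul_eq_one hX hVR) i)

theorem stmt2 (m q : ℕ) (hq : 1 ≤ q) (hqm : q ≤ m)
    (Y VL : Matrix (Fin m) (Fin q) ℝ) (VR : Matrix (Fin q) (Fin q) ℝ)
    (σ : Fin q → ℝ) (hσ : ∀ i, 0 ≤ σ i)
    (hVL : VLᵀ * VL = 1) (hVR : VRᵀ * VR = 1)
    (hY : Y = VL * Matrix.diagonal σ * VRᵀ) :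
    (VL * VRᵀ)ᵀ * (VL * VRᵀ) = 1 ∧
    Matrix.trace (Yᵀ * (VL * VRᵀ)) = Matrix.trace (Matrix.diagonal σ) ∧
    ∀ X : Matrix (Fin m) (Fin q) ℝ, Xᵀ * X = 1 →
      Matrix.trace (Yᵀ * X) ≤ Matrix.trace (Yᵀ * (VL * VRᵀ)) :=
  stmt2_general m q Y VL VR σ hσ hVL hVR hY
end

section
/- Let z ∈ ℝ^m have all entries positive, let 1 ≤ q ≤ m, and let λ* be a minimizer of F_z over Λ_{q,m}. Then for every index k with 1 ≤ k < q, if z_k < z_{k+1} then λ*_k = λ*_{k+1}; that is, any adjacent ordering violation among the first q weights forces equality of the corresponding optimal eigenvalues. -/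
/-- The objective `F_z(λ) = Σ_{i=1}^m (−log λ_i + z_i λ_i)` (indices 1,…,m). -/
noncomputable def Fobj (m : ℕ) (z lam : ℕ → ℝ) : ℝ :=
  ∑ i ∈ Finset.Icc 1 m, (-(Real.log (lam i)) + z i * lam i)

/-- The feasible set `Λ_{q,m}`: positive entries, `λ_i ≤ λ_{i+1}` for `i = 1,…,q−1`,
and `λ_q ≤ λ_j` for `j = q+1,…,m`. -/
def Feas (q m : ℕ) (lam : ℕ → ℝ) : Prop :=
  (∀ i ∈ Finset.Icc 1 m, 0 < lam i) ∧
  (∀ i, 1 ≤ i → i + 1 ≤ q → lam i ≤ lam (i + 1)) ∧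
  (∀ j, q < j → j ≤ m → lam q ≤ lam j)

/-!
Lowering `λ_{k+1}` to `λ_k`, or raising `λ_k` to `λ_{k+1}`, stays in `Λ_{q,m}`, so neither move
can decrease `F_z` at a minimizer. Adding the two resulting inequalities, the logarithms cancel and
what remains is `(z_{k+1} - z_k)(λ_{k+1} - λ_k) ≤ 0`; with `z_k < z_{k+1}` this gives
`λ_{k+1} ≤ λ_k`, the reverse of the constraint.
-/

open Function

lemma Fobj_update (m : ℕ) (z lam : ℕ → ℝ) {j : ℕ} (hj : j ∈ Finset.Icc 1 m) (c : ℝ) :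
    Fobj m z (update lam j c)
      = Fobj m z lam + ((-Real.log c + z j * c) - (-Real.log (lam j) + z j * lam j)) := by
  unfold Fobj
  rw [← Finset.add_sum_erase _ _ hj,
    ← Finset.add_sum_erase _ (fun i => -Real.log (lam i) + z i * lam i) hj,
    Finset.sum_congr rfl fun i hi => by rw [update_of_ne (Finset.ne_of_mem_erase hi)],
    update_self]
  ring

lemma Fobj_term_le_of_feas_update {m q : ℕ} {z lam : ℕ → ℝ}
    (hmin : ∀ mu : ℕ → ℝ, Feas q m mu → Fobj m z lam ≤ Fobj m z mu)
    {j : ℕ} (hj : j ∈ Finset.Icc 1 m) {c : ℝ} (hc : Feas q m (update lam j c)) :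
    -Real.log (lam j) + z j * lam j ≤ -Real.log c + z j * c := by
  have := hmin _ hc
  rw [Fobj_update m z lam hj] at this
  linarith

namespace Feas

variable {q m k : ℕ} {lam : ℕ → ℝ}

lemma update_succ_self (h : Feas q m lam) (hk : 1 ≤ k) (hkq : k + 1 ≤ q) :
    Feas q m (update lam (k + 1) (lam k)) := by
  obtain ⟨hpos, hmono, htail⟩ := h
  have hk_le := hmono k hk hkq
  refine ⟨fun i hi => ?_, fun i hi hiq => ?_, fun j hj hjm => ?_⟩
  · rcases eq_or_ne i (k + 1) with rfl | hik
    · rw [update_self]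
      exact hpos k (Finset.mem_Icc.2 ⟨hk, by grind⟩)
    · rw [update_of_ne hik]
      exact hpos i hi
  · rcases eq_or_ne i k with rfl | hik
    · rw [update_self, update_of_ne (by omega)]
    · rw [update_of_ne (by omega : i + 1 ≠ k + 1)]
      rcases eq_or_ne i (k + 1) with rfl | hik'
      · rw [update_self]
        exact hk_le.trans (hmono _ hi hiq)
      · rw [update_of_ne hik']
        exact hmono i hi hiq
  · rw [update_of_ne (by omega : j ≠ k + 1)]
    rcases eq_or_ne q (k + 1) with rfl | hqk
    · rw [update_self]
      exact hk_le.trans (htail j hj hjm)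
    · rw [update_of_ne hqk]
      exact htail j hj hjm

lemma update_self_succ (h : Feas q m lam) (hk : 1 ≤ k) (hkq : k + 1 ≤ q) (hqm : q ≤ m) :
    Feas q m (update lam k (lam (k + 1))) := by
  obtain ⟨hpos, hmono, htail⟩ := h
  have hk_le := hmono k hk hkq
  refine ⟨fun i hi => ?_, fun i hi hiq => ?_, fun j hj hjm => ?_⟩
  · rcases eq_or_ne i k with rfl | hik
    · rw [update_self]
      exact hpos (i + 1) (Finset.mem_Icc.2 ⟨by omega, by omega⟩)
    · rw [update_of_ne hik]
      exact hpos i hi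
  · rcases eq_or_ne i k with rfl | hik
    · rw [update_self, update_of_ne (by omega)]
    · rw [update_of_ne hik]
      rcases eq_or_ne (i + 1) k with rfl | hik'
      · rw [update_self]
        exact (hmono i hi hiq).trans hk_le
      · rw [update_of_ne hik']
        exact hmono i hi hiq
  · rw [update_of_ne (by omega : j ≠ k), update_of_ne (by omega : q ≠ k)]
    exact htail j hj hjm

end Feas

lemma le_of_exchange {g : ℝ → ℝ} {s t a b : ℝ} (hst : s < t)
    (ht : g b + t * b ≤ g a + t * a) (hs : g a + s * a ≤ g b + s * b) : b ≤ a := by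
  nlinarith

theorem stmt10_general (m q : ℕ) (hqm : q ≤ m) (z : ℕ → ℝ)
    (lam : ℕ → ℝ) (hfeas : Feas q m lam)
    (hmin : ∀ mu : ℕ → ℝ, Feas q m mu → Fobj m z lam ≤ Fobj m z mu) :
    ∀ k, 1 ≤ k → k + 1 ≤ q → z k < z (k + 1) → lam k = lam (k + 1) := by
  intro k hk hkq hzk
  have hk_mem : k ∈ Finset.Icc 1 m := Finset.mem_Icc.2 ⟨hk, by omega⟩
  have hk1_mem : k + 1 ∈ Finset.Icc 1 m := Finset.mem_Icc.2 ⟨by omega, by omega⟩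
  have lower := Fobj_term_le_of_feas_update hmin hk1_mem (hfeas.update_succ_self hk hkq)
  have raise := Fobj_term_le_of_feas_update hmin hk_mem
    (hfeas.update_self_succ hk hkq hqm)
  exact le_antisymm (hfeas.2.1 k hk hkq)
    (le_of_exchange (g := fun x => -Real.log x) hzk lower raise)

theorem stmt10 (m q : ℕ) (hq : 1 ≤ q) (hqm : q ≤ m) (z : ℕ → ℝ)
    (hz : ∀ i ∈ Finset.Icc 1 m, 0 < z i)
    (lam : ℕ → ℝ) (hfeas : Feas q m lam)
    (hmin : ∀ mu : ℕ → ℝ, Feas q m mu → Fobj m z lam ≤ Fobj m z mu) :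
    ∀ k, 1 ≤ k → k + 1 ≤ q → z k < z (k + 1) → lam k = lam (k + 1) :=
  stmt10_general m q hqm z lam hfeas hmin
end

section
/- Let z ∈ ℝ^m have all entries positive, let 1 ≤ q ≤ m, and let j, r with 1 ≤ j and j + r ≤ q be such that: z_{j−1} > z_j if j > 1; z_i ≤ z_{i+1} for i = j,…,j+r−1 with at least one of these inequalities strict; and either z_{j+r} > z_{j+r+1} (if j+r < q) or z_q > z_j' for all j' = q+1,…,m (if j+r = q). Define z̄ ∈ ℝ^m by z̄_i = (1/(r+1)) Σ_{s=0}^{r} z_{j+s} for i = j,…,j+r and z̄_i = z_i otherwise. Then the unique minimizer of F_z over Λ_{q,m} coincides with the unique minimizer of F_{z̄} over Λ_{q,m}, and at this common minimizer λ* one has λ*_j = λ*_{j+1} = … = λ*_{j+r}. -/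
/-!
Let `B = {j, …, j+r}` and let `c` be the mean of `z` on `B`. For every `ν`,
`F_z(ν) - F_{z̄}(ν) = Σ_B z_i ν_i - c Σ_B ν_i`; for feasible `ν` both `z` and `ν` are nondecreasing
on `B`, so this is `≥ 0` by Chebyshev's sum inequality, and it vanishes when `ν` is constant on `B`.
Replacing the entries of a feasible `ν` on `B` by their mean keeps it feasible and, by concavity of
`log`, does not increase `F_{z̄}`. Since `F_z` is strictly convex in the coordinates `1, …, m`, its
minimizer over the convex set `Λ_{q,m}` is unique; so the minimizer `μ` of `F_{z̄}` equals its own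
pooled version, i.e. is constant on `B`. Then `F_z(μ) = F_{z̄}(μ) ≤ F_{z̄}(ν) ≤ F_z(ν)`, so `μ` also
minimizes `F_z`, and uniqueness gives `λ = μ`.
-/

open Finset Real

noncomputable def poolBlock (f : ℕ → ℝ) (j r : ℕ) : ℕ → ℝ := fun i =>
  if j ≤ i ∧ i ≤ j + r then (∑ s ∈ range (r + 1), f (j + s)) / (r + 1) else f i

lemma sum_range_add_eq_sum_Icc {M : Type*} [AddCommMonoid M] (f : ℕ → M) (j r : ℕ) :
    ∑ s ∈ range (r + 1), f (j + s) = ∑ i ∈ Icc j (j + r), f i := by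
  rw [← Ico_add_one_right_eq_Icc, sum_Ico_eq_sum_range, show j + r + 1 - j = r + 1 by omega]

section poolBlock

variable {f : ℕ → ℝ} {j r i : ℕ}

lemma poolBlock_of_mem (hi : i ∈ Icc j (j + r)) :
    poolBlock f j r i = (∑ k ∈ Icc j (j + r), f k) / (r + 1) := by
  rw [poolBlock, if_pos (mem_Icc.1 hi), sum_range_add_eq_sum_Icc]

lemma poolBlock_of_notMem (hi : i ∉ Icc j (j + r)) : poolBlock f j r i = f i := by
  rw [poolBlock, if_neg (by simpa using hi)]

lemma cast_card_Icc_self_add (j r : ℕ) : (#(Icc j (j + r)) : ℝ) = r + 1 := by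
  rw [Nat.card_Icc, show j + r + 1 - j = r + 1 by omega]
  push_cast
  ring

lemma MonotoneOn.le_poolBlock (hf : MonotoneOn f (Icc j (j + r))) (hi : i ∈ Icc j (j + r)) :
    f j ≤ poolBlock f j r i := by
  have hj : j ∈ Icc j (j + r) := left_mem_Icc.2 (by omega)
  rw [poolBlock_of_mem hi, le_div_iff₀ (by positivity), ← cast_card_Icc_self_add j r, mul_comm,
    ← nsmul_eq_mul]
  exact card_nsmul_le_sum _ _ _ fun k hk => hf (mem_coe.2 hj) (mem_coe.2 hk)
    (mem_Icc.1 hk).1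

lemma MonotoneOn.poolBlock_le (hf : MonotoneOn f (Icc j (j + r))) (hi : i ∈ Icc j (j + r)) :
    poolBlock f j r i ≤ f (j + r) := by
  have hjr : j + r ∈ Icc j (j + r) := right_mem_Icc.2 (by omega)
  rw [poolBlock_of_mem hi, div_le_iff₀ (by positivity), ← cast_card_Icc_self_add j r, mul_comm,
    ← nsmul_eq_mul]
  exact sum_le_card_nsmul _ _ _ fun k hk => hf (mem_coe.2 hk) (mem_coe.2 hjr)
    (mem_Icc.1 hk).2

lemma MonotoneOn.poolBlock {s : Set ℕ} (hs : s.OrdConnected) (hf : MonotoneOn f s)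
    (hj : j ∈ s) (hjr : j + r ∈ s) : MonotoneOn (poolBlock f j r) s := by
  have hfB : MonotoneOn f (Icc j (j + r)) := hf.mono (by rw [coe_Icc]; exact hs.out hj hjr)
  intro a ha b hb hab
  by_cases haB : a ∈ Icc j (j + r) <;> by_cases hbB : b ∈ Icc j (j + r)
  · rw [poolBlock_of_mem haB, poolBlock_of_mem hbB]
  · have hrb : j + r ≤ b := by simp only [mem_Icc] at haB hbB; omega
    rw [poolBlock_of_notMem hbB]
    exact (hfB.poolBlock_le haB).trans (hf hjr hb hrb)
  · have haj : a ≤ j := by simp only [mem_Icc] at haB hbB; omega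
    rw [poolBlock_of_notMem haB]
    exact (hf ha hj haj).trans (hfB.le_poolBlock hbB)
  · rw [poolBlock_of_notMem haB, poolBlock_of_notMem hbB]
    exact hf ha hb hab

end poolBlock

lemma feas_iff {q m : ℕ} {lam : ℕ → ℝ} :
    Feas q m lam ↔ (∀ i ∈ Icc 1 m, 0 < lam i) ∧ MonotoneOn lam (Set.Icc 1 q) ∧
      (∀ j, q < j → j ≤ m → lam q ≤ lam j) := by
  refine and_congr_right' (and_congr_left' ⟨fun h => ?_, fun h i hi hiq => ?_⟩)
  · exact monotoneOn_of_le_add_one Set.ordConnected_Icc fun a _ ha ha' => h a ha.1 ha'.2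
  · exact h ⟨hi, by omega⟩ ⟨by omega, hiq⟩ (by omega)

namespace Feas

variable {q m : ℕ} {lam mu : ℕ → ℝ}

lemma poolBlock {j r : ℕ} (h : Feas q m lam) (hj : 1 ≤ j) (hjr : j + r ≤ q) :
    Feas q m (poolBlock lam j r) := by
  obtain ⟨hpos, hmono, htail⟩ := feas_iff.1 h
  have hjq : j ∈ Set.Icc 1 q := ⟨hj, by omega⟩
  have hrq : j + r ∈ Set.Icc 1 q := ⟨by omega, hjr⟩
  have hB : MonotoneOn lam (Icc j (j + r)) :=
    hmono.mono (by rw [coe_Icc]; exact Set.ordConnected_Icc.out hjq hrq)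
  refine feas_iff.2 ⟨fun i hi => ?_, hmono.poolBlock Set.ordConnected_Icc hjq hrq,
    fun k hqk hkm => ?_⟩
  · by_cases hiB : i ∈ Icc j (j + r)
    · have hjm : j ∈ Icc 1 m := by simp only [mem_Icc] at hi hiB ⊢; omega
      exact (hpos j hjm).trans_le (hB.le_poolBlock hiB)
    · exact poolBlock_of_notMem hiB ▸ hpos i hi
  · rw [poolBlock_of_notMem (i := k) (by simp only [mem_Icc]; omega)]
    by_cases hqB : q ∈ Icc j (j + r)
    · have hqr : q = j + r := by simp only [mem_Icc] at hqB; omega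
      exact (hB.poolBlock_le hqB).trans (hqr ▸ htail k hqk hkm)
    · exact poolBlock_of_notMem hqB ▸ htail k hqk hkm

lemma midpoint (hlam : Feas q m lam) (hmu : Feas q m mu) :
    Feas q m (fun i => (lam i + mu i) / 2) := by
  obtain ⟨hlamP, hlamM, hlamT⟩ := hlam
  obtain ⟨hmuP, hmuM, hmuT⟩ := hmu
  refine ⟨fun i hi => ?_, fun i h1 h2 => ?_, fun k h1 h2 => ?_⟩
  · linarith [hlamP i hi, hmuP i hi]
  · linarith [hlamM i h1 h2, hmuM i h1 h2]
  · linarith [hlamT k h1 h2, hmuT k h1 h2]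

end Feas

lemma sum_log_le_card_mul_log_mean {ι : Type*} {s : Finset ι} {f : ι → ℝ} (hs : s.Nonempty)
    (hf : ∀ i ∈ s, 0 < f i) : ∑ i ∈ s, log (f i) ≤ #s * log ((∑ i ∈ s, f i) / #s) := by
  have hcard : (0 : ℝ) < #s := by exact_mod_cast hs.card_pos
  have jensen := strictConcaveOn_log_Ioi.concaveOn.le_map_sum (t := s) (p := f)
    (w := fun _ => (#s : ℝ)⁻¹) (fun _ _ => by positivity)
    (by rw [sum_const, nsmul_eq_mul]; field_simp) hf
  simp only [smul_eq_mul, ← mul_sum] at jensen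
  calc ∑ i ∈ s, log (f i) = #s * ((#s : ℝ)⁻¹ * ∑ i ∈ s, log (f i)) := by field_simp
    _ ≤ #s * log ((∑ i ∈ s, f i) / #s) := by rw [div_eq_inv_mul]; gcongr

lemma log_add_log_div_two_lt_log_add_div_two {a b : ℝ} (ha : 0 < a) (hb : 0 < b) (hab : a ≠ b) :
    (log a + log b) / 2 < log ((a + b) / 2) := by
  have := strictConcaveOn_log_Ioi.2 ha hb hab (by norm_num : (0 : ℝ) < 1 / 2)
    (by norm_num : (0 : ℝ) < 1 / 2) (by norm_num)
  simp only [smul_eq_mul] at this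
  calc (log a + log b) / 2 = 1 / 2 * log a + 1 / 2 * log b := by ring
    _ < log (1 / 2 * a + 1 / 2 * b) := this
    _ = log ((a + b) / 2) := by ring_nf

lemma log_add_log_div_two_le_log_add_div_two {a b : ℝ} (ha : 0 < a) (hb : 0 < b) :
    (log a + log b) / 2 ≤ log ((a + b) / 2) := by
  rcases eq_or_ne a b with rfl | hab
  · rw [add_self_div_two, add_self_div_two]
  · exact (log_add_log_div_two_lt_log_add_div_two ha hb hab).le

section Fobj

variable {m : ℕ}

lemma Fobj_sub_Fobj_of_eqOn_compl {B : Finset ℕ} (hB : B ⊆ Icc 1 m) {z z' lam lam' : ℕ → ℝ}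
    (hz : ∀ i ∉ B, z i = z' i) (hlam : ∀ i ∉ B, lam i = lam' i) :
    Fobj m z lam - Fobj m z' lam' =
      ∑ i ∈ B, ((-log (lam i) + z i * lam i) - (-log (lam' i) + z' i * lam' i)) := by
  rw [Fobj, Fobj, ← sum_sub_distrib]
  refine (sum_subset hB fun i _ hi => ?_).symm
  rw [hz i hi, hlam i hi, sub_self]

variable {j r : ℕ}

lemma Fobj_sub_Fobj_poolBlock (hB : Icc j (j + r) ⊆ Icc 1 m) (z ν : ℕ → ℝ) :
    Fobj m z ν - Fobj m (poolBlock z j r) ν = ∑ i ∈ Icc j (j + r), z i * ν i -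
      (∑ i ∈ Icc j (j + r), z i) * (∑ i ∈ Icc j (j + r), ν i) / (r + 1) := by
  rw [Fobj_sub_Fobj_of_eqOn_compl hB (fun i hi => (poolBlock_of_notMem hi).symm) fun _ _ => rfl]
  calc _ = ∑ i ∈ Icc j (j + r),
          (z i * ν i - (∑ k ∈ Icc j (j + r), z k) / (r + 1) * ν i) :=
        sum_congr rfl fun i hi => by rw [poolBlock_of_mem hi]; ring
    _ = _ := by rw [sum_sub_distrib, ← mul_sum]; ring

lemma Fobj_poolBlock_le (hB : Icc j (j + r) ⊆ Icc 1 m) {z ν : ℕ → ℝ}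
    (hz : MonotoneOn z (Icc j (j + r))) (hν : MonotoneOn ν (Icc j (j + r))) :
    Fobj m (poolBlock z j r) ν ≤ Fobj m z ν := by
  have chebyshev := (hz.monovaryOn hν).sum_mul_sum_le_card_mul_sum
  rw [cast_card_Icc_self_add] at chebyshev
  have hdiff := Fobj_sub_Fobj_poolBlock hB z ν
  have hmean : (∑ i ∈ Icc j (j + r), z i) * (∑ i ∈ Icc j (j + r), ν i) / (r + 1) ≤
      ∑ i ∈ Icc j (j + r), z i * ν i := by
    rw [div_le_iff₀ (by positivity)]
    linarith
  linarith

lemma Fobj_poolBlock_eq (hB : Icc j (j + r) ⊆ Icc 1 m) {z ν : ℕ → ℝ}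
    (hν : ∀ i ∈ Icc j (j + r), ν i = ν j) :
    Fobj m (poolBlock z j r) ν = Fobj m z ν := by
  have hzν : ∑ i ∈ Icc j (j + r), z i * ν i = (∑ i ∈ Icc j (j + r), z i) * ν j := by
    rw [sum_mul]
    exact sum_congr rfl fun i hi => by rw [hν i hi]
  have hν' : ∑ i ∈ Icc j (j + r), ν i = (r + 1) * ν j := by
    rw [sum_congr rfl hν, sum_const, nsmul_eq_mul, cast_card_Icc_self_add]
  have hdiff := Fobj_sub_Fobj_poolBlock hB z ν
  rw [hzν, hν', mul_left_comm, mul_div_cancel_left₀ _ (by positivity), sub_self] at hdiff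
  linarith

lemma Fobj_poolBlock_poolBlock_le (hB : Icc j (j + r) ⊆ Icc 1 m) (z : ℕ → ℝ) {ν : ℕ → ℝ}
    (hν : ∀ i ∈ Icc j (j + r), 0 < ν i) :
    Fobj m (poolBlock z j r) (poolBlock ν j r) ≤ Fobj m (poolBlock z j r) ν := by
  rw [← sub_nonpos, Fobj_sub_Fobj_of_eqOn_compl hB (fun _ _ => rfl)
    fun i hi => poolBlock_of_notMem hi]
  rw [sum_congr rfl fun i hi => by rw [poolBlock_of_mem (f := z) hi, poolBlock_of_mem (f := ν) hi]]
  have jensen := sum_log_le_card_mul_log_mean (nonempty_Icc.2 (by omega)) hν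
  simp only [sum_sub_distrib, sum_add_distrib, sum_neg_distrib, sum_const, nsmul_eq_mul,
    ← mul_sum, cast_card_Icc_self_add] at jensen ⊢
  have hlin : (r + 1 : ℝ) * ((∑ k ∈ Icc j (j + r), z k) / (r + 1) *
      ((∑ k ∈ Icc j (j + r), ν k) / (r + 1))) =
      (∑ k ∈ Icc j (j + r), z k) / (r + 1) * ∑ k ∈ Icc j (j + r), ν k := by
    field_simp
  linarith

end Fobj

lemma Fobj_midpoint_lt {m : ℕ} {z lam mu : ℕ → ℝ} (hlam : ∀ i ∈ Icc 1 m, 0 < lam i)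
    (hmu : ∀ i ∈ Icc 1 m, 0 < mu i) (hne : ∃ i ∈ Icc 1 m, lam i ≠ mu i) :
    Fobj m z (fun i => (lam i + mu i) / 2) < (Fobj m z lam + Fobj m z mu) / 2 := by
  rw [Fobj, Fobj, Fobj, ← sum_add_distrib, sum_div]
  obtain ⟨i₀, hi₀, hne₀⟩ := hne
  refine sum_lt_sum (fun i hi => ?_) ⟨i₀, hi₀, ?_⟩
  · linarith [log_add_log_div_two_le_log_add_div_two (hlam i hi) (hmu i hi)]
  · linarith [log_add_log_div_two_lt_log_add_div_two (hlam i₀ hi₀) (hmu i₀ hi₀) hne₀]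

lemma eqOn_of_minimize_Fobj {q m : ℕ} {z lam mu : ℕ → ℝ}
    (hlam : Feas q m lam ∧ ∀ ν, Feas q m ν → Fobj m z lam ≤ Fobj m z ν)
    (hmu : Feas q m mu ∧ ∀ ν, Feas q m ν → Fobj m z mu ≤ Fobj m z ν) :
    ∀ i ∈ Icc 1 m, lam i = mu i := by
  by_contra! hne
  have hmid := Fobj_midpoint_lt hlam.1.1 hmu.1.1 hne (z := z)
  linarith [hlam.2 _ (hlam.1.midpoint hmu.1), hlam.2 mu hmu.1, hmu.2 lam hlam.1]

theorem stmt11_general (m q : ℕ) (hqm : q ≤ m) (z : ℕ → ℝ)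
    (j r : ℕ) (hj : 1 ≤ j) (hjr : j + r ≤ q)
    (hviol : ∀ i, j ≤ i → i < j + r → z i ≤ z (i + 1))
    (zbar : ℕ → ℝ)
    (hzbar : zbar = fun i =>
      if j ≤ i ∧ i ≤ j + r then (∑ s ∈ Finset.range (r + 1), z (j + s)) / (r + 1) else z i)
    (lam mu : ℕ → ℝ)
    (hlam : Feas q m lam ∧ ∀ nu : ℕ → ℝ, Feas q m nu → Fobj m z lam ≤ Fobj m z nu)
    (hmu : Feas q m mu ∧ ∀ nu : ℕ → ℝ, Feas q m nu → Fobj m zbar mu ≤ Fobj m zbar nu) :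
    (∀ i ∈ Finset.Icc 1 m, lam i = mu i) ∧
    (∀ i, j ≤ i → i ≤ j + r → lam i = lam j) := by
  change zbar = poolBlock z j r at hzbar
  subst hzbar
  have hB : Icc j (j + r) ⊆ Icc 1 m := Icc_subset_Icc hj (hjr.trans hqm)
  have hjB : j ∈ Icc 1 m := hB (left_mem_Icc.2 (by omega))
  have hblock {ν : ℕ → ℝ} (hν : Feas q m ν) : MonotoneOn ν (Icc j (j + r)) :=
    (feas_iff.1 hν).2.1.mono (by rw [coe_Icc]; exact Set.Icc_subset_Icc hj hjr)
  have hz : MonotoneOn z (Icc j (j + r)) := by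
    rw [coe_Icc]
    exact monotoneOn_of_le_add_one Set.ordConnected_Icc fun i _ hi hi' => hviol i hi.1 hi'.2
  have hmu_pool : ∀ i ∈ Icc 1 m, mu i = poolBlock mu j r i :=
    eqOn_of_minimize_Fobj hmu ⟨hmu.1.poolBlock hj hjr, fun ν hν =>
      (Fobj_poolBlock_poolBlock_le hB z fun i hi => hmu.1.1 i (hB hi)).trans (hmu.2 ν hν)⟩
  have hmu_const : ∀ i ∈ Icc j (j + r), mu i = mu j := fun i hi => by
    rw [hmu_pool i (hB hi), hmu_pool j hjB, poolBlock_of_mem hi,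
      poolBlock_of_mem (left_mem_Icc.2 (by omega))]
  have hmu_min : Feas q m mu ∧ ∀ ν, Feas q m ν → Fobj m z mu ≤ Fobj m z ν :=
    ⟨hmu.1, fun ν hν => calc
      Fobj m z mu = Fobj m (poolBlock z j r) mu := (Fobj_poolBlock_eq hB hmu_const).symm
      _ ≤ Fobj m (poolBlock z j r) ν := hmu.2 ν hν
      _ ≤ Fobj m z ν := Fobj_poolBlock_le hB hz (hblock hν)⟩
  have hlam_mu := eqOn_of_minimize_Fobj hlam hmu_min
  refine ⟨hlam_mu, fun i hi hi' => ?_⟩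
  have hiB : i ∈ Icc j (j + r) := mem_Icc.2 ⟨hi, hi'⟩
  rw [hlam_mu i (hB hiB), hlam_mu j hjB, hmu_const i hiB]

theorem stmt11 (m q : ℕ) (hq : 1 ≤ q) (hqm : q ≤ m) (z : ℕ → ℝ)
    (hz : ∀ i ∈ Finset.Icc 1 m, 0 < z i)
    (j r : ℕ) (hj : 1 ≤ j) (hjr : j + r ≤ q)
    (hleft : 1 < j → z j < z (j - 1))
    (hviol : ∀ i, j ≤ i → i < j + r → z i ≤ z (i + 1))
    (hstrict : ∃ i, j ≤ i ∧ i < j + r ∧ z i < z (i + 1))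
    (hright1 : j + r < q → z (j + r + 1) < z (j + r))
    (hright2 : j + r = q → ∀ j', q < j' → j' ≤ m → z j' < z q)
    (zbar : ℕ → ℝ)
    (hzbar : zbar = fun i =>
      if j ≤ i ∧ i ≤ j + r then (∑ s ∈ Finset.range (r + 1), z (j + s)) / (r + 1) else z i)
    (lam mu : ℕ → ℝ)
    (hlam : Feas q m lam ∧ ∀ nu : ℕ → ℝ, Feas q m nu → Fobj m z lam ≤ Fobj m z nu)
    (hmu : Feas q m mu ∧ ∀ nu : ℕ → ℝ, Feas q m nu → Fobj m zbar mu ≤ Fobj m zbar nu) :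
    (∀ i ∈ Finset.Icc 1 m, lam i = mu i) ∧
    (∀ i, j ≤ i → i ≤ j + r → lam i = lam j) :=
  stmt11_general m q hqm z j r hj hjr hviol zbar hzbar lam mu hlam hmu
end

section
/- Let z ∈ ℝ^m have all entries positive, let 1 ≤ q ≤ m, and let λ* be a minimizer of F_z over Λ_{q,m}. Then for every j with q < j ≤ m, if λ*_q < λ*_j (the constraint λ_q ≤ λ_j is inactive at the optimum) then λ*_j = 1/z_j. -/
/-!
Changing only the coordinate `λ_j` keeps `λ` feasible as long as the new value stays positive and
above `λ_q`. If `λ*_q < λ*_j`, this makes `λ*_j` a local minimum of `t ↦ -log t + z_j t`, and the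
vanishing of its derivative `-1/t + z_j` gives `λ*_j = 1/z_j`.
-/

open Function Filter

lemma eq_one_div_of_isLocalMin_neg_log_add_mul {c x : ℝ} (hx : 0 < x)
    (h : IsLocalMin (fun t => -Real.log t + c * t) x) : x = 1 / c := by
  have hderiv : HasDerivAt (fun t => -Real.log t + c * t) (-x⁻¹ + c) x :=
    (Real.hasDerivAt_log hx.ne').neg.add ((hasDerivAt_id' x).const_mul c) |>.congr_deriv
      (by ring)
  have hc : c = x⁻¹ := by linarith [h.hasDerivAt_eq_zero hderiv]
  rw [hc, one_div, inv_inv]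

lemma Fobj_update_sub {m j : ℕ} (hj : j ∈ Finset.Icc 1 m) (z lam : ℕ → ℝ) (t : ℝ) :
    Fobj m z (update lam j t) - Fobj m z lam
      = (-Real.log t + z j * t) - (-Real.log (lam j) + z j * lam j) := by
  unfold Fobj
  rw [← Finset.sum_sub_distrib, Finset.sum_eq_single_of_mem j hj]
  · simp
  · intro i _ hij
    simp [update_of_ne hij]

lemma Feas.update {q m j : ℕ} {lam : ℕ → ℝ} (h : Feas q m lam) (hqj : q < j) {t : ℝ}
    (ht : 0 < t) (hqt : lam q ≤ t) : Feas q m (update lam j t) := by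
  obtain ⟨hpos, hmono, hq_le⟩ := h
  refine ⟨fun i hi => ?_, fun i hi hiq => ?_, fun k hqk hkm => ?_⟩
  · rcases eq_or_ne i j with rfl | hij
    · simpa using ht
    · simpa [update_of_ne hij] using hpos i hi
  · rw [update_of_ne (by omega), update_of_ne (by omega)]
    exact hmono i hi hiq
  · rw [update_of_ne hqj.ne]
    rcases eq_or_ne k j with rfl | hkj
    · simpa using hqt
    · simpa [update_of_ne hkj] using hq_le k hqk hkm

theorem stmt13_general (m q : ℕ) (z : ℕ → ℝ)
    (lam : ℕ → ℝ) (hfeas : Feas q m lam)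
    (hmin : ∀ mu : ℕ → ℝ, Feas q m mu → Fobj m z lam ≤ Fobj m z mu) :
    ∀ j, q < j → j ≤ m → lam q < lam j → lam j = 1 / z j := by
  intro j hqj hjm hlt
  have hj : j ∈ Finset.Icc 1 m := Finset.mem_Icc.mpr ⟨by omega, hjm⟩
  have hpos : 0 < lam j := hfeas.1 j hj
  refine eq_one_div_of_isLocalMin_neg_log_add_mul hpos ?_
  filter_upwards [Ioi_mem_nhds hpos, Ioi_mem_nhds hlt] with t ht hqt
  have hle := hmin _ (hfeas.update hqj ht hqt.le)
  linarith [Fobj_update_sub hj z lam t]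

theorem stmt13 (m q : ℕ) (hq : 1 ≤ q) (hqm : q ≤ m) (z : ℕ → ℝ)
    (hz : ∀ i ∈ Finset.Icc 1 m, 0 < z i)
    (lam : ℕ → ℝ) (hfeas : Feas q m lam)
    (hmin : ∀ mu : ℕ → ℝ, Feas q m mu → Fobj m z lam ≤ Fobj m z mu) :
    ∀ j, q < j → j ≤ m → lam q < lam j → lam j = 1 / z j :=
  stmt13_general m q z lam hfeas hmin
end

section
/- Let S be a real symmetric m×m matrix, let λ ∈ ℝ be such that λI_m − S is positive semidefinite (e.g., λ is the largest eigenvalue of S), and let Λ be an m×m diagonal matrix with nonnegative diagonal entries. Then for all real m×m matrices U and U₀ with UᵀU = I_m and U₀ᵀU₀ = I_m, Tr(SUΛUᵀ) − 2·Tr(Λ U₀ᵀ(S − λI_m)U) ≤ Tr(SU₀ΛU₀ᵀ) − 2·Tr(Λ U₀ᵀ(S − λI_m)U₀); that is, up to an additive constant, the linear function U ↦ 2·Tr(Λ U₀ᵀ(S − λI_m)U) majorizes U ↦ Tr(SUΛUᵀ) on the set of orthogonal matrices, with equality at U = U₀. -/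
/-!
Put `A = λI - S ⪰ 0` and `D = diag d`. For orthogonal `V`, `Tr(S V D Vᵀ) = λ Tr D - Tr(D Vᵀ A V)`,
so (right side) - (left side) is the quadratic form `Tr(D (U - U₀)ᵀ A (U - U₀))`, which is
nonnegative because `(U - U₀)ᵀ A (U - U₀) ⪰ 0` has a nonnegative diagonal and `d ≥ 0`.
-/

open Matrix

namespace Matrix

variable {n R : Type*} [Fintype n]

theorem PosSemidef.trace_diagonal_mul_nonneg [DecidableEq n] [Ring R] [PartialOrder R]
    [IsOrderedRing R] [StarRing R] {P : Matrix n n R} (hP : P.PosSemidef) {d : n → R}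
    (hd : ∀ i, 0 ≤ d i) : 0 ≤ trace (diagonal d * P) :=
  Fintype.sum_nonneg fun i ↦ by simpa [diagonal_mul] using mul_nonneg (hd i) hP.diag_nonneg

variable [CommRing R]

theorem trace_mul_transpose_mul_mul_comm {A D : Matrix n n R} (hA : Aᵀ = A) (hD : Dᵀ = D)
    (X Y : Matrix n n R) : trace (D * Xᵀ * A * Y) = trace (D * Yᵀ * A * X) := by
  rw [← trace_transpose]
  simp only [transpose_mul, transpose_transpose, hA, hD]
  rw [← Matrix.mul_assoc, ← Matrix.mul_assoc, trace_mul_comm]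
  simp only [Matrix.mul_assoc]

theorem trace_mul_transpose_sub_mul_mul_sub {A D : Matrix n n R} (hA : Aᵀ = A) (hD : Dᵀ = D)
    (X Y : Matrix n n R) :
    trace (D * (X - Y)ᵀ * A * (X - Y)) =
      trace (D * Xᵀ * A * X) - 2 * trace (D * Yᵀ * A * X) + trace (D * Yᵀ * A * Y) := by
  simp only [transpose_sub, Matrix.mul_sub, Matrix.sub_mul, trace_sub]
  rw [trace_mul_transpose_mul_mul_comm hA hD X Y]
  ring

theorem trace_mul_mul_mul_transpose [DecidableEq n] {V : Matrix n n R} (hV : Vᵀ * V = 1)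
    (S D : Matrix n n R) (l : R) :
    trace (S * V * D * Vᵀ) = l * trace D - trace (D * Vᵀ * (l • 1 - S) * V) := by
  have hconj : D * Vᵀ * (l • 1 - S) * V = l • D - D * Vᵀ * S * V := by
    simp [Matrix.mul_sub, Matrix.sub_mul, Matrix.mul_assoc, hV]
  rw [hconj, trace_sub, trace_smul, smul_eq_mul, sub_sub_cancel, trace_mul_comm,
    ← Matrix.mul_assoc, ← Matrix.mul_assoc, trace_mul_comm]
  simp only [Matrix.mul_assoc]

end Matrix

theorem stmt16_general (m : ℕ) (S : Matrix (Fin m) (Fin m) ℝ)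
    (l : ℝ) (hl : (l • (1 : Matrix (Fin m) (Fin m) ℝ) - S).PosSemidef)
    (d : Fin m → ℝ) (hd : ∀ i, 0 ≤ d i)
    (U U₀ : Matrix (Fin m) (Fin m) ℝ) (hU : Uᵀ * U = 1) (hU₀ : U₀ᵀ * U₀ = 1) :
    Matrix.trace (S * U * Matrix.diagonal d * Uᵀ)
        - 2 * Matrix.trace (Matrix.diagonal d * U₀ᵀ *
            (S - l • (1 : Matrix (Fin m) (Fin m) ℝ)) * U)
      ≤ Matrix.trace (S * U₀ * Matrix.diagonal d * U₀ᵀ)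
        - 2 * Matrix.trace (Matrix.diagonal d * U₀ᵀ *
            (S - l • (1 : Matrix (Fin m) (Fin m) ℝ)) * U₀) := by
  set A := l • (1 : Matrix (Fin m) (Fin m) ℝ) - S
  have hA : Aᵀ = A := hl.isHermitian
  have hQ : 0 ≤ trace (diagonal d * (U - U₀)ᵀ * A * (U - U₀)) := by
    simpa [Matrix.mul_assoc] using
      (hl.conjTranspose_mul_mul_same (U - U₀)).trace_diagonal_mul_nonneg hd
  rw [trace_mul_transpose_sub_mul_mul_sub hA (diagonal_transpose d)] at hQ
  have hSA : S - l • 1 = -A := by simp [A]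
  rw [trace_mul_mul_mul_transpose hU S _ l, trace_mul_mul_mul_transpose hU₀ S _ l, hSA]
  simp only [Matrix.mul_neg, Matrix.neg_mul, trace_neg]
  linarith

theorem stmt16 (m : ℕ) (S : Matrix (Fin m) (Fin m) ℝ) (hS : S.IsSymm)
    (l : ℝ) (hl : (l • (1 : Matrix (Fin m) (Fin m) ℝ) - S).PosSemidef)
    (d : Fin m → ℝ) (hd : ∀ i, 0 ≤ d i)
    (U U₀ : Matrix (Fin m) (Fin m) ℝ) (hU : Uᵀ * U = 1) (hU₀ : U₀ᵀ * U₀ = 1) :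
    Matrix.trace (S * U * Matrix.diagonal d * Uᵀ)
        - 2 * Matrix.trace (Matrix.diagonal d * U₀ᵀ *
            (S - l • (1 : Matrix (Fin m) (Fin m) ℝ)) * U)
      ≤ Matrix.trace (S * U₀ * Matrix.diagonal d * U₀ᵀ)
        - 2 * Matrix.trace (Matrix.diagonal d * U₀ᵀ *
            (S - l • (1 : Matrix (Fin m) (Fin m) ℝ)) * U₀) :=
  stmt16_general m S l hl d hd U U₀ hU hU₀
end

section
/- Let S be a real symmetric m×m matrix and let λ ∈ ℝ be such that λI_m − S is positive semidefinite (e.g., λ is the largest eigenvalue of S). Let U₀ be an m×m matrix with U₀ᵀU₀ = I_m and let Ξ₀ = diag(ξ₀) with ξ₀ ∈ (0,∞)^m. Define F = (S − λI_m)U₀Ξ₀⁻¹ and G = −Ξ₀⁻¹U₀ᵀ(S − λI_m)U₀Ξ₀⁻¹. Then for every m×m matrix U with UᵀU = I_m and every diagonal Ξ = diag(ξ) with ξ ∈ (0,∞)^m, Tr(S U Ξ⁻¹ Uᵀ) − 2·Tr(FᵀU) − Tr(GΞ) − λ·Tr(Ξ⁻¹) ≤ Tr(S U₀ Ξ₀⁻¹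 U₀ᵀ) − 2·Tr(FᵀU₀) − Tr(GΞ₀) − λ·Tr(Ξ₀⁻¹); that is, up to an additive constant, the decoupled function 2·Tr(FᵀU) + Tr(GΞ) + λ·Tr(Ξ⁻¹) jointly majorizes Tr(S U Ξ⁻¹ Uᵀ) over orthogonal U and positive diagonal Ξ, with equality at (U₀, Ξ₀). -/
/-!
Put `P = λI - S ⪰ 0` and `W = U₀Ξ₀⁻¹`, so that `F = -PW` and `G = WᵀPW`. Completing the square,
the left-hand side equals `-Tr((U - WΞ)ᵀ P (U - WΞ) Ξ⁻¹)`, which is `≤ 0` because `P ⪰ 0` and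
`Ξ⁻¹` is a nonnegative diagonal, while at `(U₀, Ξ₀)` it vanishes since `U₀ = WΞ₀`.
-/

open Matrix

namespace Matrix

variable {n R : Type*} [Fintype n] [DecidableEq n]

lemma PosSemidef.trace_mul_diagonal_nonneg {A : Matrix n n ℝ} (hA : A.PosSemidef) {d : n → ℝ}
    (hd : ∀ i, 0 ≤ d i) : 0 ≤ (A * diagonal d).trace := by
  simp only [trace, diag, mul_diagonal]
  exact Finset.sum_nonneg fun i _ => mul_nonneg hA.diag_nonneg (hd i)

lemma diagonal_mul_diagonal_inv [Field R] {d : n → R} (hd : ∀ i, d i ≠ 0) :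
    diagonal d * diagonal (fun i => (d i)⁻¹) = 1 := by
  simp [diagonal_mul_diagonal, mul_inv_cancel₀ (hd _)]

variable [CommRing R]

lemma trace_conj_of_transpose_mul_self {U : Matrix n n R} (hU : Uᵀ * U = 1) (D : Matrix n n R) :
    (U * D * Uᵀ).trace = D.trace := by
  rw [trace_mul_comm, ← Matrix.mul_assoc, hU, Matrix.one_mul]

lemma trace_transpose_mul_mul_self_mul {P : Matrix n n R} (hP : Pᵀ = P) (U W : Matrix n n R)
    {Ξ D : Matrix n n R} (hΞ : Ξᵀ = Ξ) (hΞD : Ξ * D = 1) :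
    ((U - W * Ξ)ᵀ * P * (U - W * Ξ) * D).trace =
      (P * U * D * Uᵀ).trace - 2 * (Wᵀ * P * U).trace + (Wᵀ * P * W * Ξ).trace := by
  have hDΞ : D * Ξ = 1 := mul_eq_one_comm.mp hΞD
  have hUU : (Uᵀ * P * U * D).trace = (P * U * D * Uᵀ).trace := by
    simp only [Matrix.mul_assoc]; rw [trace_mul_comm]; simp only [Matrix.mul_assoc]
  have hUW : (Uᵀ * P * (W * Ξ) * D).trace = (Wᵀ * P * U).trace := by
    simp only [Matrix.mul_assoc, hΞD, Matrix.mul_one]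
    rw [← trace_transpose]
    simp only [transpose_mul, transpose_transpose, hP, Matrix.mul_assoc]
  have hWU : (Ξ * Wᵀ * P * U * D).trace = (Wᵀ * P * U).trace := by
    rw [trace_mul_comm]; simp only [← Matrix.mul_assoc, hDΞ, Matrix.one_mul]
  have hWW : (Ξ * Wᵀ * P * (W * Ξ) * D).trace = (Wᵀ * P * W * Ξ).trace := by
    simp only [Matrix.mul_assoc, hΞD, Matrix.mul_one]; rw [trace_mul_comm]
    simp only [Matrix.mul_assoc]
  simp only [transpose_sub, transpose_mul, hΞ, Matrix.sub_mul, Matrix.mul_sub, trace_sub]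
  rw [hUU, hUW, hWU, hWW]
  ring

lemma trace_objective_eq_neg_trace (S : Matrix n n R) (l : R) {U : Matrix n n R}
    (hU : Uᵀ * U = 1) (W : Matrix n n R) {Ξ D : Matrix n n R} (hΞ : Ξᵀ = Ξ) (hΞD : Ξ * D = 1)
    (hS : (l • 1 - S)ᵀ = l • 1 - S) :
    (S * U * D * Uᵀ).trace - 2 * (((S - l • 1) * W)ᵀ * U).trace
        - (-(Wᵀ * (S - l • 1) * W) * Ξ).trace - l * D.trace =
      -((U - W * Ξ)ᵀ * (l • 1 - S) * (U - W * Ξ) * D).trace := by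
  obtain ⟨P, rfl⟩ : ∃ P, S = l • 1 - P := ⟨l • 1 - S, (sub_sub_cancel _ _).symm⟩
  rw [sub_sub_cancel] at hS ⊢
  rw [sub_sub_cancel_left, trace_transpose_mul_mul_self_mul hS U W hΞ hΞD]
  simp only [Matrix.sub_mul, Matrix.smul_mul, Matrix.one_mul, Matrix.neg_mul, Matrix.mul_neg,
    neg_neg, transpose_neg, transpose_mul, hS, trace_sub, trace_smul, trace_neg,
    trace_conj_of_transpose_mul_self hU, smul_eq_mul]
  ring

end Matrix

theorem stmt18_general (m : ℕ) (S : Matrix (Fin m) (Fin m) ℝ)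
    (l : ℝ) (hl : (l • (1 : Matrix (Fin m) (Fin m) ℝ) - S).PosSemidef)
    (U₀ : Matrix (Fin m) (Fin m) ℝ) (hU₀ : U₀ᵀ * U₀ = 1)
    (ξ₀ : Fin m → ℝ) (hξ₀ : ∀ i, 0 < ξ₀ i)
    (F G : Matrix (Fin m) (Fin m) ℝ)
    (hF : F = (S - l • (1 : Matrix (Fin m) (Fin m) ℝ)) * U₀ *
        Matrix.diagonal (fun i => (ξ₀ i)⁻¹))
    (hG : G = -(Matrix.diagonal (fun i => (ξ₀ i)⁻¹) * U₀ᵀ *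
        (S - l • (1 : Matrix (Fin m) (Fin m) ℝ)) * U₀ *
        Matrix.diagonal (fun i => (ξ₀ i)⁻¹)))
    (U : Matrix (Fin m) (Fin m) ℝ) (hU : Uᵀ * U = 1)
    (ξ : Fin m → ℝ) (hξ : ∀ i, 0 < ξ i) :
    Matrix.trace (S * U * Matrix.diagonal (fun i => (ξ i)⁻¹) * Uᵀ)
        - 2 * Matrix.trace (Fᵀ * U) - Matrix.trace (G * Matrix.diagonal ξ)
        - l * Matrix.trace (Matrix.diagonal (fun i => (ξ i)⁻¹))
      ≤ Matrix.trace (S * U₀ * Matrix.diagonal (fun i => (ξ₀ i)⁻¹) * U₀ᵀ)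
        - 2 * Matrix.trace (Fᵀ * U₀) - Matrix.trace (G * Matrix.diagonal ξ₀)
        - l * Matrix.trace (Matrix.diagonal (fun i => (ξ₀ i)⁻¹)) := by
  set W := U₀ * diagonal (fun i => (ξ₀ i)⁻¹)
  have hFW : F = (S - l • 1) * W := by rw [hF, Matrix.mul_assoc]
  have hGW : G = -(Wᵀ * (S - l • 1) * W) := by
    simp only [hG, W, transpose_mul, diagonal_transpose, Matrix.mul_assoc]
  have hP : (l • 1 - S)ᵀ = l • 1 - S := (isHermitian_iff_isSymm.mp hl.isHermitian).eq
  rw [hFW, hGW,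
    trace_objective_eq_neg_trace S l hU W (diagonal_transpose ξ)
      (diagonal_mul_diagonal_inv fun i => (hξ i).ne') hP,
    trace_objective_eq_neg_trace S l hU₀ W (diagonal_transpose ξ₀)
      (diagonal_mul_diagonal_inv fun i => (hξ₀ i).ne') hP]
  have hW : U₀ - W * diagonal ξ₀ = 0 := by
    rw [Matrix.mul_assoc, mul_eq_one_comm.mp (diagonal_mul_diagonal_inv fun i => (hξ₀ i).ne'),
      Matrix.mul_one, sub_self]
  have hPSD := hl.conjTranspose_mul_mul_same (U - W * diagonal ξ)
  rw [conjTranspose_eq_transpose_of_trivial] at hPSD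
  simpa [hW] using hPSD.trace_mul_diagonal_nonneg fun i => (inv_pos.mpr (hξ i)).le

theorem stmt18 (m : ℕ) (S : Matrix (Fin m) (Fin m) ℝ) (hS : S.IsSymm)
    (l : ℝ) (hl : (l • (1 : Matrix (Fin m) (Fin m) ℝ) - S).PosSemidef)
    (U₀ : Matrix (Fin m) (Fin m) ℝ) (hU₀ : U₀ᵀ * U₀ = 1)
    (ξ₀ : Fin m → ℝ) (hξ₀ : ∀ i, 0 < ξ₀ i)
    (F G : Matrix (Fin m) (Fin m) ℝ)
    (hF : F = (S - l • (1 : Matrix (Fin m) (Fin m) ℝ)) * U₀ *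
        Matrix.diagonal (fun i => (ξ₀ i)⁻¹))
    (hG : G = -(Matrix.diagonal (fun i => (ξ₀ i)⁻¹) * U₀ᵀ *
        (S - l • (1 : Matrix (Fin m) (Fin m) ℝ)) * U₀ *
        Matrix.diagonal (fun i => (ξ₀ i)⁻¹)))
    (U : Matrix (Fin m) (Fin m) ℝ) (hU : Uᵀ * U = 1)
    (ξ : Fin m → ℝ) (hξ : ∀ i, 0 < ξ i) :
    Matrix.trace (S * U * Matrix.diagonal (fun i => (ξ i)⁻¹) * Uᵀ)
        - 2 * Matrix.trace (Fᵀ * U) - Matrix.trace (G * Matrix.diagonal ξ)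
        - l * Matrix.trace (Matrix.diagonal (fun i => (ξ i)⁻¹))
      ≤ Matrix.trace (S * U₀ * Matrix.diagonal (fun i => (ξ₀ i)⁻¹) * U₀ᵀ)
        - 2 * Matrix.trace (Fᵀ * U₀) - Matrix.trace (G * Matrix.diagonal ξ₀)
        - l * Matrix.trace (Matrix.diagonal (fun i => (ξ₀ i)⁻¹)) :=
  stmt18_general m S l hl U₀ hU₀ ξ₀ hξ₀ F G hF hG U hU ξ hξ
end
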